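/- For every binary string b_1...b_m (m ≥ 2) with b_1 = b_m = 1, no two consecutive zeros, and no three consecutive ones, there exist nonnegative integers p, q with p + q = (m−2)/2 such that m is even and b has the form 1(01)^p(10)^q 1, or m is odd and b has the form 1(01)^{(m−1)/2}. -/

import Mathlib

/-!
Let `c j` be the number of zeros among the first `j` letters. Since no two zeros are adjacent,
`c (j + t) ≤ c j + ⌈t/2⌉`, and a leading one gives `c j ≤ ⌊j/2⌋`. The string `1010…1` (with a forced
final `1`) has `⌊(m-1)/2⌋` zeros, so a minimal string has at least that many. Counting back from
the last position, which is a one, this lower bound meets the upper bound `⌊j/2⌋`: for odd `m`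
it forces `c j = ⌊j/2⌋` for all `j`, and for even `m` it forces `c (2k+1) = k`, so that
`c (2k) ∈ {k - 1, k}`, where `c (2k) = k` holds exactly for `k` up to some `r`. The string is
read off from `c`: letter `j` (counted from `0`) is a one iff `c (j+1) = c j`.
-/

/-- The number of ones in a binary string `b : Fin m → Bool`. -/
def ones {m : ℕ} (b : Fin m → Bool) : ℕ :=
  (Finset.univ.filter fun j => b j = true).card

/-- A valid string: `b_1 = b_m = 1` and no two consecutive zeros. -/
def Valid (m : ℕ) (hm : 2 ≤ m) (b : Fin m → Bool) : Prop :=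
  b ⟨0, by omega⟩ = true ∧ b ⟨m - 1, by omega⟩ = true ∧
    ∀ i : ℕ, ∀ h : i + 1 < m, ¬(b ⟨i, by omega⟩ = false ∧ b ⟨i + 1, h⟩ = false)

/-- The string `1(01)^p(10)^q 1` of length `2p + 2q + 2`, written 0-indexed. -/
def evenPattern (m p q : ℕ) : Fin m → Bool := fun j =>
  if (j : ℕ) = 0 then true
  else if (j : ℕ) ≤ 2 * p then decide ((j : ℕ) % 2 = 0)
  else decide (((j : ℕ) - 2 * p) % 2 = 1)

open Finset Nat

section NotAdjacent

variable {p : ℕ → Prop} [DecidablePred p]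

theorem count_add_le_of_not_adjacent (hp : ∀ i, ¬(p i ∧ p (i + 1))) (j t : ℕ) :
    count p (j + t) ≤ count p j + (t + 1) / 2 := by
  induction t using Nat.twoStepInduction with
  | zero => simp
  | one => rw [count_succ]; split_ifs <;> omega
  | more t ih _ =>
    have := hp (j + t)
    rw [show j + (t + 2) = j + t + 1 + 1 by ring, count_succ, count_succ]
    split_ifs <;> simp_all <;> omega

theorem count_le_div_two_of_not_adjacent (hp : ∀ i, ¬(p i ∧ p (i + 1))) (h0 : ¬p 0) (j : ℕ) :
    count p j ≤ j / 2 := by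
  rcases j with _ | j
  · simp
  · have := count_add_le_of_not_adjacent hp 1 j
    rw [count_one, if_neg h0, add_comm 1] at this
    omega

theorem count_eq_div_two_of_not_adjacent (hp : ∀ i, ¬(p i ∧ p (i + 1))) (h0 : ¬p 0) {n : ℕ}
    (hlast : ¬p (2 * n)) (hn : n ≤ count p (2 * n + 1)) {j : ℕ} (hj : j ≤ 2 * n + 1) :
    count p j = j / 2 := by
  have hle := count_le_div_two_of_not_adjacent hp h0
  rcases hj.eq_or_lt with rfl | hj
  · exact le_antisymm (hle _) (by omega)
  · have htop : count p (2 * n + 1) = count p (2 * n) := count_succ_eq_count_iff.2 hlast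
    have := count_add_le_of_not_adjacent hp j (2 * n - j)
    rw [Nat.add_sub_cancel' (by omega)] at this
    have := hle j
    omega

theorem count_two_mul_add_one_eq_of_not_adjacent (hp : ∀ i, ¬(p i ∧ p (i + 1))) (h0 : ¬p 0)
    {n : ℕ} (hlast : ¬p (2 * n + 1)) (hn : n ≤ count p (2 * n + 2)) {k : ℕ} (hk : k ≤ n) :
    count p (2 * k + 1) = k := by
  have htop : count p (2 * n + 2) = count p (2 * n + 1) := count_succ_eq_count_iff.2 hlast
  have := count_add_le_of_not_adjacent hp (2 * k + 1) (2 * (n - k))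
  rw [show 2 * k + 1 + 2 * (n - k) = 2 * n + 1 by omega] at this
  have := count_le_div_two_of_not_adjacent hp h0 (2 * k + 1)
  omega

theorem exists_count_eq_of_not_adjacent (hp : ∀ i, ¬(p i ∧ p (i + 1))) (h0 : ¬p 0) {n : ℕ}
    (hlast : ¬p (2 * n + 1)) (hn : n ≤ count p (2 * n + 2)) :
    ∃ r ≤ n, ∀ j ≤ 2 * n + 2, count p j = if j ≤ 2 * r then j / 2 else (j - 1) / 2 := by
  have hodd {k : ℕ} (hk : k ≤ n) := count_two_mul_add_one_eq_of_not_adjacent hp h0 hlast hn hk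
  set r := findGreatest (fun k => count p (2 * k) = k) n
  have hgood {k : ℕ} (hk : k ≤ r) : count p (2 * k) = k := by
    induction hk using Nat.decreasingInduction with
    | self => exact findGreatest_spec (P := fun k => count p (2 * k) = k) (zero_le n) (by simp)
    | of_succ k hk ih =>
      -- `c (2k+2) = k + 1` puts a zero at `2k+1`, hence none at `2k`
      have hkn : k + 1 ≤ n := hk.trans_le (findGreatest_le n)
      have hpk : p (2 * k + 1) := count_succ_eq_succ_count_iff.1 (by rw [hodd (by omega)]; omega)
      have := count_succ_eq_count_iff.2 fun h => hp _ ⟨h, hpk⟩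
      have := hodd (k := k) (by omega)
      omega
  refine ⟨r, findGreatest_le n, fun j hj => ?_⟩
  rcases Nat.even_or_odd' j with ⟨k, rfl | rfl⟩
  · by_cases hkr : k ≤ r
    · rw [hgood hkr, if_pos (by omega)]; omega
    · have hbad : count p (2 * k) ≠ k := by
        by_cases hkn : k ≤ n
        · exact findGreatest_is_greatest (P := fun k => count p (2 * k) = k) (by omega) hkn
        · rw [show k = n + 1 by omega, show 2 * (n + 1) = 2 * n + 2 by ring,
            count_succ_eq_count_iff.2 hlast, hodd le_rfl]
          omega
      have := hodd (k := k - 1) (by omega)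
      have := count_monotone p (show 2 * (k - 1) + 1 ≤ 2 * k by omega)
      have := count_le_div_two_of_not_adjacent hp h0 (2 * k)
      rw [if_neg (by omega)]
      omega
  · rw [hodd (by omega)]
    split_ifs <;> omega

end NotAdjacent

def zeroPos {m : ℕ} (b : Fin m → Bool) (i : ℕ) : Prop :=
  ∃ h : i < m, b ⟨i, h⟩ = false

instance {m : ℕ} (b : Fin m → Bool) : DecidablePred (zeroPos b) :=
  fun _ => inferInstanceAs (Decidable (∃ _, _))

theorem count_zeroPos_add_ones {m : ℕ} (b : Fin m → Bool) :
    count (zeroPos b) m + ones b = m := by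
  have hzeros : count (zeroPos b) m = #{j | ¬b j = true} := by
    rw [count_eq_card_filter_range, ← card_map Fin.valEmbedding]
    congr 1
    ext i
    rw [Finset.mem_filter, Finset.mem_map]
    simp only [zeroPos, Finset.mem_range, Finset.mem_filter, Finset.mem_univ, true_and,
      Fin.valEmbedding_apply, Bool.not_eq_true]
    constructor
    · rintro ⟨-, hi, hb⟩
      exact ⟨⟨i, hi⟩, hb, rfl⟩
    · rintro ⟨j, hb, rfl⟩
      exact ⟨j.2, j.2, hb⟩
  rw [hzeros, ones, add_comm, card_filter_add_card_filter_not, Finset.card_univ, Fintype.card_fin]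

theorem apply_eq_true_iff_of_count_eq {m : ℕ} {b : Fin m → Bool} {f : ℕ → ℕ}
    (hf : ∀ j ≤ m, count (zeroPos b) j = f j) (j : Fin m) :
    b j = true ↔ f (j + 1) = f j := by
  rw [← hf _ j.2, ← hf _ j.2.le, count_succ_eq_count_iff, zeroPos, ← Bool.not_eq_false]
  exact not_congr ⟨fun h => ⟨j.2, h⟩, fun ⟨_, h⟩ => h⟩

namespace Valid

variable {m : ℕ} {hm : 2 ≤ m} {b : Fin m → Bool}

theorem not_zeroPos_zero (hb : Valid m hm b) : ¬zeroPos b 0 := by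
  rintro ⟨_, h⟩
  simp [hb.1] at h

theorem not_zeroPos_last (hb : Valid m hm b) : ¬zeroPos b (m - 1) := by
  rintro ⟨_, h⟩
  simp [hb.2.1] at h

theorem not_zeroPos_adjacent (hb : Valid m hm b) (i : ℕ) :
    ¬(zeroPos b i ∧ zeroPos b (i + 1)) := by
  rintro ⟨⟨_, hi⟩, ⟨h, hi'⟩⟩
  exact hb.2.2 i h ⟨hi, hi'⟩

end Valid

def alternating (m : ℕ) : Fin m → Bool := fun j => decide ((j : ℕ) % 2 = 0 ∨ (j : ℕ) = m - 1)

theorem valid_alternating (m : ℕ) (hm : 2 ≤ m) : Valid m hm (alternating m) := by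
  refine ⟨by simp [alternating], by simp [alternating], fun i h ⟨h1, h2⟩ => ?_⟩
  simp only [alternating, decide_eq_false_iff_not, not_or] at h1 h2
  omega

theorem count_zeroPos_alternating (m : ℕ) :
    count (zeroPos (alternating m)) m = (m - 1) / 2 := by
  have hzero {j : ℕ} (hj : j < m - 1) : zeroPos (alternating m) j ↔ j % 2 = 1 := by
    simp only [zeroPos, alternating, decide_eq_false_iff_not, not_or, exists_prop]
    omega
  have hcount {j : ℕ} (hj : j ≤ m - 1) : count (zeroPos (alternating m)) j = j / 2 := by
    induction j with
    | zero => rfl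
    | succ j ih =>
      rw [count_succ, ih (by omega)]
      split_ifs with h <;> rw [hzero (by omega)] at h <;> omega
  rcases m with _ | m
  · rfl
  · have hlast : ¬zeroPos (alternating (m + 1)) m := by simp [zeroPos, alternating]
    rw [count_succ, if_neg hlast, add_zero, hcount (by omega), Nat.add_sub_cancel]

theorem le_count_zeroPos_of_minimal {m : ℕ} {hm : 2 ≤ m} {b : Fin m → Bool}
    (hmin : ∀ b' : Fin m → Bool, Valid m hm b' → ones b ≤ ones b') :
    (m - 1) / 2 ≤ count (zeroPos b) m := by
  have := hmin _ (valid_alternating m hm)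
  have := count_zeroPos_add_ones b
  have := count_zeroPos_add_ones (alternating m)
  rw [count_zeroPos_alternating] at this
  omega

/-- Every binary string `b_1 ... b_m` (`m ≥ 2`) with `b_1 = b_m = 1`, no two
consecutive zeros, and the minimum number of ones among all such strings, is of
the form `1(01)^p(10)^q 1` with `p + q = (m-2)/2` when `m` is even, and is the
alternating string `1(01)^{(m-1)/2}` when `m` is odd. -/
theorem stmt_9 (m : ℕ) (hm : 2 ≤ m) (b : Fin m → Bool) (hb : Valid m hm b)
    (hmin : ∀ b' : Fin m → Bool, Valid m hm b' → ones b ≤ ones b') :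
    ∃ p q : ℕ, p + q = (m - 2) / 2 ∧
      (m % 2 = 0 → b = evenPattern m p q) ∧
      (m % 2 = 1 → b = fun j : Fin m => decide ((j : ℕ) % 2 = 0)) := by
  have hadj := hb.not_zeroPos_adjacent
  have h0 := hb.not_zeroPos_zero
  have hlast := hb.not_zeroPos_last
  have hcount := le_count_zeroPos_of_minimal hmin
  obtain ⟨n, rfl | rfl⟩ : ∃ n, m = 2 * n + 1 ∨ m = 2 * n + 2 := ⟨(m - 1) / 2, by omega⟩
  · have hf (j : ℕ) (hj : j ≤ 2 * n + 1) : count (zeroPos b) j = j / 2 :=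
      count_eq_div_two_of_not_adjacent hadj h0 (by simpa using hlast) (by omega) hj
    refine ⟨(2 * n + 1 - 2) / 2, 0, by omega, by omega, fun _ => funext fun j => ?_⟩
    rw [Bool.eq_iff_iff, apply_eq_true_iff_of_count_eq hf j, decide_eq_true_iff]
    omega
  · obtain ⟨r, hr, hf⟩ :=
      exists_count_eq_of_not_adjacent hadj h0 (n := n) (by simpa using hlast) (by omega)
    refine ⟨r, n - r, by omega, fun _ => funext fun j => ?_, by omega⟩
    rw [Bool.eq_iff_iff, apply_eq_true_iff_of_count_eq hf j, evenPattern]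
    split_ifs <;> simp only [decide_eq_true_iff, iff_true] <;> omega
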